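/- Let σ > 0 and ρ ∈ (0, 1]. For ε > 0 set c := 1 − 2^{−2ε} and define V(ε) := inf { 2σ² − 2 ω₁ ρ σ² √c − 2 ω₂ σ² : (ω₁, ω₂) ∈ ℝ², ω₂² (1 − ρ² (1 − c) c) ≤ (1 − ω₁² − 2 ω₁ ω₂ ρ √c) · c }. Then there exist constants C > 0 and ε₀ > 0 such that for all ε ∈ (0, ε₀), |V(ε) − 2σ²(1 − √((1 + ρ²) · 2 ε · ln 2))| ≤ C ε. (V(ε) is the minimum second-frame distortion under zero framewise-marginal perception loss for the symmetric two-frame Gauss–Markov source at per-frame rate R₁ = R₂ = ε.) -/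

import Mathlib

open MeasureTheory

/-- `cRate ε = 1 − 2^{−2ε}`, the quantity `c` associated with rate `ε`. -/
noncomputable def cRate (ε : ℝ) : ℝ := 1 - (2 : ℝ) ^ (-(2 * ε))

/-! The constraint reads `Q(ω) ≤ c` for the quadratic form `Q` of
`A = [[c, ρc√c], [ρc√c, 1 - ρ²(1 - c)c]]`, and the objective is `2σ²(1 - ⟨ℓ, ω⟩)` with
`ℓ = (ρ√c, 1)`. Cauchy–Schwarz for the inner product defined by `A` gives
`⟨ℓ, ω⟩² ≤ Q(ω) · ℓᵀA⁻¹ℓ`, with equality at `ω ∝ A⁻¹ℓ`, and `ℓᵀA⁻¹ℓ = 1 + ρ² - ρ²c`.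
So `V(ε) = 2σ²(1 - √(c(1 + ρ² - ρ²c)))` exactly. With `x = 2ε ln 2` we have `c = 1 - e^{-x}`,
hence `|c - x| ≤ x²`, and `|√a - √b| ≤ √|a - b|` bounds the error by `2σ² · 2x`. -/

open Real

theorem sq_mul_det_le_adjugate_mul_quadForm (a b d p q x y : ℝ) :
    (p * x + q * y) ^ 2 * (a * d - b ^ 2) ≤
      (d * p ^ 2 - 2 * b * p * q + a * q ^ 2) * (a * x ^ 2 + 2 * b * x * y + d * y ^ 2) := by
  nlinarith [sq_nonneg (p * (b * x + d * y) - q * (a * x + b * y))]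

theorem abs_sqrt_sub_sqrt_le_sqrt_abs_sub {u v : ℝ} (hu : 0 ≤ u) (hv : 0 ≤ v) :
    |√u - √v| ≤ √|u - v| := by
  rw [le_sqrt (abs_nonneg _) (abs_nonneg _), sq_abs]
  obtain ⟨a, ha, rfl⟩ : ∃ a, 0 ≤ a ∧ u = a ^ 2 := ⟨√u, sqrt_nonneg u, (sq_sqrt hu).symm⟩
  obtain ⟨b, hb, rfl⟩ : ∃ b, 0 ≤ b ∧ v = b ^ 2 := ⟨√v, sqrt_nonneg v, (sq_sqrt hv).symm⟩
  rw [sqrt_sq ha, sqrt_sq hb, show a ^ 2 - b ^ 2 = (a - b) * (a + b) by ring, abs_mul,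
    abs_of_nonneg (add_nonneg ha hb), sq, ← abs_mul_abs_self (a - b)]
  refine mul_le_mul_of_nonneg_left ?_ (abs_nonneg _)
  rw [abs_sub_le_iff]
  constructor <;> linarith

def distortionSet (σ ρ c : ℝ) : Set ℝ :=
  { v | ∃ ω₁ ω₂ : ℝ, ω₂ ^ 2 * (1 - ρ ^ 2 * (1 - c) * c) ≤
      (1 - ω₁ ^ 2 - 2 * ω₁ * ω₂ * ρ * √c) * c ∧
    v = 2 * σ ^ 2 - 2 * ω₁ * ρ * σ ^ 2 * √c - 2 * ω₂ * σ ^ 2 }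

section Program

variable {ρ c : ℝ}

theorem objective_sq_le_of_feasible {ω₁ ω₂ : ℝ} (hc : 0 < c) (hρc : ρ ^ 2 * c < 1)
    (h : ω₂ ^ 2 * (1 - ρ ^ 2 * (1 - c) * c) ≤ (1 - ω₁ ^ 2 - 2 * ω₁ * ω₂ * ρ * √c) * c) :
    (ρ * √c * ω₁ + ω₂) ^ 2 ≤ c * (1 + ρ ^ 2 - ρ ^ 2 * c) := by
  have hs : √c ^ 2 = c := sq_sqrt hc.le
  have hcs := sq_mul_det_le_adjugate_mul_quadForm c (ρ * c * √c) (1 - ρ ^ 2 * (1 - c) * c)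
    (ρ * √c) 1 ω₁ ω₂
  have hdet : c * (1 - ρ ^ 2 * (1 - c) * c) - (ρ * c * √c) ^ 2 = c * (1 - ρ ^ 2 * c) := by
    linear_combination (-(ρ ^ 2 * c ^ 2)) * hs
  have hadj : (1 - ρ ^ 2 * (1 - c) * c) * (ρ * √c) ^ 2 - 2 * (ρ * c * √c) * (ρ * √c) * 1
      + c * 1 ^ 2 = c * (1 + ρ ^ 2 - ρ ^ 2 * c) * (1 - ρ ^ 2 * c) := by
    linear_combination (ρ ^ 2 * (1 - ρ ^ 2 * (1 - c) * c) - 2 * ρ ^ 2 * c) * hs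
  have hQ : c * ω₁ ^ 2 + 2 * (ρ * c * √c) * ω₁ * ω₂ + (1 - ρ ^ 2 * (1 - c) * c) * ω₂ ^ 2 ≤ c := by
    linarith
  rw [hdet, hadj, one_mul] at hcs
  have hpos : 0 < c * (1 - ρ ^ 2 * c) := mul_pos hc (by linarith)
  have hK : 0 ≤ c * (1 + ρ ^ 2 - ρ ^ 2 * c) * (1 - ρ ^ 2 * c) :=
    mul_nonneg (mul_nonneg hc.le (by nlinarith [sq_nonneg ρ])) (by linarith)
  refine le_of_mul_le_mul_right ?_ hpos
  calc _ ≤ _ := hcs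
    _ ≤ c * (1 + ρ ^ 2 - ρ ^ 2 * c) * (1 - ρ ^ 2 * c) * c := mul_le_mul_of_nonneg_left hQ hK
    _ = _ := by ring

-- `ω ∝ A⁻¹ℓ`, scaled so that the constraint is tight.
theorem maximizer_feasible_and_objective_eq {m : ℝ} (hc : 0 ≤ c) (hm : 0 < m)
    (hm2 : m ^ 2 = c * (1 + ρ ^ 2 - ρ ^ 2 * c)) :
    (c / m) ^ 2 * (1 - ρ ^ 2 * (1 - c) * c) ≤
        (1 - (ρ * √c * (1 - c) / m) ^ 2 - 2 * (ρ * √c * (1 - c) / m) * (c / m) * ρ * √c) * c ∧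
      ρ * √c * (ρ * √c * (1 - c) / m) + c / m = m := by
  have hs : √c ^ 2 = c := sq_sqrt hc
  constructor
  · apply le_of_eq
    field_simp
    linear_combination c * ρ ^ 2 * (1 - c ^ 2) * hs - c * hm2
  · field_simp
    linear_combination (ρ ^ 2 * (1 - c)) * hs - hm2

theorem isLeast_distortionSet (σ : ℝ) (hc : 0 < c) (hρc : ρ ^ 2 * c < 1) :
    IsLeast (distortionSet σ ρ c) (2 * σ ^ 2 * (1 - √(c * (1 + ρ ^ 2 - ρ ^ 2 * c)))) := by
  set m := √(c * (1 + ρ ^ 2 - ρ ^ 2 * c))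
  have hm2 : m ^ 2 = c * (1 + ρ ^ 2 - ρ ^ 2 * c) := sq_sqrt (by nlinarith)
  have hm : 0 < m := sqrt_pos.2 (by nlinarith)
  constructor
  · obtain ⟨hcon, hval⟩ := maximizer_feasible_and_objective_eq hc.le hm hm2
    exact ⟨_, _, hcon, by linear_combination 2 * σ ^ 2 * hval⟩
  · rintro v ⟨ω₁, ω₂, h, rfl⟩
    have hobj : ρ * √c * ω₁ + ω₂ ≤ m :=
      (le_abs_self _).trans (abs_le_sqrt (objective_sq_le_of_feasible hc hρc h))
    nlinarith [mul_le_mul_of_nonneg_left hobj (sq_nonneg σ)]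

theorem abs_sqrt_sub_sqrt_optimum_le {x : ℝ} (hρ : ρ ^ 2 ≤ 1) (hc : 0 ≤ c)
    (hρc : ρ ^ 2 * c < 1) (hcx : c ≤ x) (hxc : |c - x| ≤ x ^ 2) :
    |√((1 + ρ ^ 2) * x) - √(c * (1 + ρ ^ 2 - ρ ^ 2 * c))| ≤ 2 * x := by
  have hdiff : |(1 + ρ ^ 2) * x - c * (1 + ρ ^ 2 - ρ ^ 2 * c)| ≤ (2 * x) ^ 2 := by
    rw [abs_le] at hxc ⊢
    constructor <;> nlinarith [sq_nonneg ρ, mul_le_mul hcx hcx hc (hc.trans hcx)]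
  calc _ ≤ √|(1 + ρ ^ 2) * x - c * (1 + ρ ^ 2 - ρ ^ 2 * c)| :=
        abs_sqrt_sub_sqrt_le_sqrt_abs_sub (by nlinarith [sq_nonneg ρ])
          (mul_nonneg hc (by linarith [sq_nonneg ρ]))
    _ ≤ √((2 * x) ^ 2) := sqrt_le_sqrt hdiff
    _ = 2 * x := sqrt_sq (by linarith)

end Program

theorem one_sub_exp_neg_le (x : ℝ) : 1 - exp (-x) ≤ x := by
  linarith [add_one_le_exp (-x)]

theorem abs_one_sub_exp_neg_sub_le {x : ℝ} (hx : |x| ≤ 1) : |1 - exp (-x) - x| ≤ x ^ 2 := by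
  rw [← abs_neg, ← neg_sq]
  convert abs_exp_sub_one_sub_id_le (x := -x) (by rwa [abs_neg]) using 2
  ring

theorem cRate_eq (ε : ℝ) : cRate ε = 1 - exp (-(2 * ε * log 2)) := by
  rw [cRate, rpow_def_of_pos two_pos]
  ring_nf

theorem statement9 (σ ρ : ℝ) (hσ : 0 < σ) (hρ : ρ ∈ Set.Ioc (0 : ℝ) 1) :
    ∃ C : ℝ, 0 < C ∧ ∃ ε₀ : ℝ, 0 < ε₀ ∧ ∀ ε ∈ Set.Ioo (0 : ℝ) ε₀,
      |sInf { v : ℝ | ∃ ω₁ ω₂ : ℝ,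
            ω₂ ^ 2 * (1 - ρ ^ 2 * (1 - cRate ε) * cRate ε) ≤
              (1 - ω₁ ^ 2 - 2 * ω₁ * ω₂ * ρ * Real.sqrt (cRate ε)) * cRate ε ∧
            v = 2 * σ ^ 2 - 2 * ω₁ * ρ * σ ^ 2 * Real.sqrt (cRate ε) - 2 * ω₂ * σ ^ 2 }
          - 2 * σ ^ 2 * (1 - Real.sqrt ((1 + ρ ^ 2) * (2 * ε * Real.log 2)))|
        ≤ C * ε := by
  have hρ2 : ρ ^ 2 ≤ 1 := pow_le_one₀ hρ.1.le hρ.2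
  refine ⟨8 * σ ^ 2, by positivity, 1 / 2, by norm_num, ?_⟩
  rintro ε ⟨hε0, hε⟩
  have hlog2 : 0 < log 2 := log_pos one_lt_two
  have hlog2' : log 2 < 1 := by linarith [log_two_lt_d9]
  set x := 2 * ε * log 2
  have hx0 : 0 < x := by positivity
  have hx1 : x ≤ 1 := by nlinarith
  have hc := cRate_eq ε
  have hc0 : 0 < cRate ε := by rw [hc, sub_pos, exp_lt_one_iff]; linarith
  have hρc : ρ ^ 2 * cRate ε < 1 := by
    have : cRate ε < 1 := by rw [hc]; linarith [exp_pos (-x)]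
    nlinarith
  change |sInf (distortionSet σ ρ (cRate ε)) - _| ≤ _
  rw [(isLeast_distortionSet σ hc0 hρc).csInf_eq]
  have hsqrt := abs_sqrt_sub_sqrt_optimum_le hρ2 hc0.le hρc (hc ▸ one_sub_exp_neg_le x)
    (hc ▸ abs_one_sub_exp_neg_sub_le (by rwa [abs_of_pos hx0]))
  have hx2 : x ≤ 2 * ε := by nlinarith
  calc _ = |2 * σ ^ 2 * (√((1 + ρ ^ 2) * x) - √(cRate ε * (1 + ρ ^ 2 - ρ ^ 2 * cRate ε)))| := by
        ring_nf
    _ ≤ 2 * σ ^ 2 * (2 * x) := by rw [abs_mul, abs_of_pos (by positivity)]; gcongr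
    _ ≤ 8 * σ ^ 2 * ε := by nlinarith [mul_le_mul_of_nonneg_left hx2 (sq_nonneg σ)]
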